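/- arXiv:2309.06919 — 2 statements merged into one kernel-verified Lean document; each statement's English description precedes it below -/
import Mathlib

section
/- Let 0 < s₁ < s₂ < 1, 1 ≤ r ≤ p < ∞, Ω ⊆ ℝ^N a bounded open set with diam(Ω) < R, and A a bounded vector field on the convex hull of Ω. Then there exists a constant C = C(Ω, N, p, r) > 0 such that for every f ∈ L^p(Ω, ℂ), [f]_{W^{s₁,r}_A(Ω)}^r ≤ C / (s₂ - s₁)^{(p-r)/p} · [f]_{W^{s₂,p}_A(Ω)}^r. In particular W^{s₂,p}_A(Ω, ℂ) embeds continuously into W^{s₁,r}_A(Ω, ℂ). -/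
open MeasureTheory ENNReal NNReal Set
noncomputable section

abbrev Euc (N : ℕ) := EuclideanSpace ℝ (Fin N)

/-- The magnetic phase factor `e^{i (x-y)·A((x+y)/2)}`. -/
def phase {N : ℕ} (A : Euc N → Euc N) (x y : Euc N) : ℂ :=
  Complex.exp (Complex.I * ((inner ℝ (x - y) (A ((2:ℝ)⁻¹ • (x + y))) : ℝ) : ℂ))

/-- The magnetic difference `f(x) - e^{i(x-y)·A((x+y)/2)} f(y)`. -/
def mdiff {N : ℕ} (A : Euc N → Euc N) (f : Euc N → ℂ) (x y : Euc N) : ℂ :=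
  f x - phase A x y * f y

/-- Magnetic Gagliardo-type double integral over a set `H ⊆ ℝ^N × ℝ^N`. -/
def magJ {N : ℕ} (A : Euc N → Euc N) (f : Euc N → ℂ) (H : Set (Euc N × Euc N))
    (s p : ℝ) : ℝ≥0∞ :=
  ∫⁻ z in H, (‖mdiff A f z.1 z.2‖₊ : ℝ≥0∞) ^ p / (‖z.1 - z.2‖₊ : ℝ≥0∞) ^ ((N : ℝ) + s * p)

/-- Magnetic Gagliardo seminorm `[f]_{W^{s,p}_A(Ω)}`. -/
def magSemi {N : ℕ} (A : Euc N → Euc N) (f : Euc N → ℂ) (Ω : Set (Euc N)) (s p : ℝ) : ℝ≥0∞ :=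
  magJ A f (Ω ×ˢ Ω) s p ^ (1 / p)

/-- Gagliardo seminorm `[f]_{W^{s,p}(Ω)}` (the case `A ≡ 0`). -/
def gagSemi {N : ℕ} (f : Euc N → ℂ) (Ω : Set (Euc N)) (s p : ℝ) : ℝ≥0∞ :=
  magSemi (fun _ => (0 : Euc N)) f Ω s p

/-- Membership in the fractional Sobolev space `W^{s,p}(Ω, ℂ)`. -/
def memW {N : ℕ} (f : Euc N → ℂ) (Ω : Set (Euc N)) (s p : ℝ) : Prop :=
  MemLp f (ENNReal.ofReal p) (volume.restrict Ω) ∧ gagSemi f Ω s p < ∞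

/-- Full fractional Sobolev norm `‖f‖_{W^{s,p}(Ω)}`. -/
def normW {N : ℕ} (f : Euc N → ℂ) (Ω : Set (Euc N)) (s p : ℝ) : ℝ≥0∞ :=
  (eLpNorm f (ENNReal.ofReal p) (volume.restrict Ω) ^ p + gagSemi f Ω s p ^ p) ^ (1 / p)

/-- `Ω` has Lipschitz boundary: near any boundary point, `Ω` is the region above the
graph of a Lipschitz function in some direction `v`. -/
def HasLipschitzBoundary {N : ℕ} (Ω : Set (Euc N)) : Prop :=
  ∀ a ∈ frontier Ω, ∃ U : Set (Euc N), a ∈ U ∧ IsOpen U ∧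
    ∃ (v : Euc N) (φ : Euc N → ℝ) (L : ℝ≥0), ‖v‖ = 1 ∧ LipschitzWith L φ ∧
      (∀ x : Euc N, φ x = φ (x - (inner ℝ x v : ℝ) • v)) ∧
      Ω ∩ U = {x : Euc N | φ x < (inner ℝ x v : ℝ)} ∩ U

/-- The ground state energy `E^{p,q}_{s,A}`. -/
def energy {N : ℕ} (A : Euc N → Euc N) (Ω : Set (Euc N)) (s p : ℝ) (q : ℝ≥0∞) : ℝ≥0∞ :=
  ⨅ (f : Euc N → ℂ) (_ : memW f Ω s p)
    (_ : eLpNorm f q (volume.restrict Ω) ≠ 0),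
    magSemi A f Ω s p / eLpNorm f q (volume.restrict Ω)

/-- The ground state manifold `M^{p,q}_{s,A}`. -/
def ground {N : ℕ} (A : Euc N → Euc N) (Ω : Set (Euc N)) (s p : ℝ) (q : ℝ≥0∞) :
    Set (Euc N → ℂ) :=
  {f | memW f Ω s p ∧ eLpNorm f q (volume.restrict Ω) ≠ 0 ∧
    magSemi A f Ω s p / eLpNorm f q (volume.restrict Ω) = energy A Ω s p q}

/-- `L^q` distance to the ground state manifold, `d^q_{s,A}(f)`. -/
def gdist {N : ℕ} (A : Euc N → Euc N) (Ω : Set (Euc N)) (s p : ℝ) (q : ℝ≥0∞)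
    (f : Euc N → ℂ) : ℝ≥0∞ :=
  ⨅ (φ : Euc N → ℂ) (_ : φ ∈ ground A Ω s p q),
    eLpNorm (f - φ) q (volume.restrict Ω)

/-!
Write `θ = r / p`. Pointwise, the `(s₁, r)` Gagliardo density is the `θ`-th power of the
`(s₂, p)` density times the kernel `|x - y| ^ ((s₂ - s₁) r - N (1 - θ))`, and Hölder's inequality
with exponents `1/θ` and `1/(1-θ)` bounds its integral by `[f]_{s₂,p}^r` times a power of
`∫∫_{Ω×Ω} |x - y| ^ β` with `β > -N`, which is finite because `Ω` is bounded. The magnetic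
densities need not be measurable, so Hölder is proved from Young's inequality, which only
requires the kernel to be measurable. When `r = p` the kernel is bounded by a power of `diam Ω`.
-/

section Holder

variable {α : Type*} [MeasurableSpace α] {μ : Measure α} {F K : α → ℝ≥0∞} {θ : ℝ}

lemma ENNReal.rpow_mul_le_add (a b : ℝ≥0∞) (hθ₀ : 0 < θ) (hθ₁ : θ < 1) {t : ℝ≥0∞}
    (ht₀ : t ≠ 0) (ht : t ≠ ⊤) :
    a ^ θ * b ≤ ENNReal.ofReal θ * (t * a) +
      ENNReal.ofReal (1 - θ) * (t ^ (-(θ / (1 - θ))) * b ^ (1 - θ)⁻¹) := by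
  have h₁ : 0 < 1 - θ := by linarith
  have hsplit : a ^ θ * b = (t * a) ^ θ * (t ^ (-θ) * b) := by
    rw [ENNReal.mul_rpow_of_nonneg _ _ hθ₀.le, mul_mul_mul_comm, ← ENNReal.rpow_add _ _ ht₀ ht]
    simp
  calc a ^ θ * b = (t * a) ^ θ * (t ^ (-θ) * b) := hsplit
    _ ≤ ((t * a) ^ θ) ^ θ⁻¹ / ENNReal.ofReal θ⁻¹ +
        (t ^ (-θ) * b) ^ (1 - θ)⁻¹ / ENNReal.ofReal (1 - θ)⁻¹ :=
      ENNReal.young_inequality _ _ (Real.HolderConjugate.inv_one_sub_inv hθ₀ hθ₁)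
    _ = _ := by
      rw [← ENNReal.rpow_mul, mul_inv_cancel₀ hθ₀.ne', ENNReal.rpow_one,
        ENNReal.mul_rpow_of_nonneg _ _ (inv_nonneg.2 h₁.le), ← ENNReal.rpow_mul,
        ENNReal.ofReal_inv_of_pos hθ₀, ENNReal.ofReal_inv_of_pos h₁, div_eq_mul_inv, inv_inv,
        div_eq_mul_inv, inv_inv, neg_mul, ← div_eq_mul_inv, mul_comm _ (ENNReal.ofReal θ),
        mul_comm _ (ENNReal.ofReal (1 - θ))]

lemma lintegral_rpow_mul_le_add (hK : AEMeasurable K μ) (hθ₀ : 0 < θ) (hθ₁ : θ < 1)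
    {t : ℝ≥0∞} (ht₀ : t ≠ 0) (ht : t ≠ ⊤) :
    ∫⁻ a, F a ^ θ * K a ∂μ ≤ ENNReal.ofReal θ * (t * ∫⁻ a, F a ∂μ) +
      ENNReal.ofReal (1 - θ) * (t ^ (-(θ / (1 - θ))) * ∫⁻ a, K a ^ (1 - θ)⁻¹ ∂μ) := by
  have htκ : t ^ (-(θ / (1 - θ))) ≠ ⊤ := by simp [ENNReal.rpow_eq_top_iff, ht₀, ht]
  calc ∫⁻ a, F a ^ θ * K a ∂μ
      ≤ ∫⁻ a, ENNReal.ofReal θ * (t * F a) +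
          ENNReal.ofReal (1 - θ) * (t ^ (-(θ / (1 - θ))) * K a ^ (1 - θ)⁻¹) ∂μ :=
        lintegral_mono fun a ↦ ENNReal.rpow_mul_le_add _ _ hθ₀ hθ₁ ht₀ ht
    _ = _ := by
      rw [lintegral_add_right' _ (((hK.pow_const _).const_mul _).const_mul _),
        lintegral_const_mul' _ _ ofReal_ne_top, lintegral_const_mul' _ _ ht,
        lintegral_const_mul' _ _ ofReal_ne_top, lintegral_const_mul' _ _ htκ]

lemma lintegral_rpow_mul_le (hK : AEMeasurable K μ) (hθ₀ : 0 < θ) (hθ₁ : θ < 1)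
    (hKq : ∫⁻ a, K a ^ (1 - θ)⁻¹ ∂μ ≠ ⊤) :
    ∫⁻ a, F a ^ θ * K a ∂μ ≤ (∫⁻ a, F a ∂μ) ^ θ * (∫⁻ a, K a ^ (1 - θ)⁻¹ ∂μ) ^ (1 - θ) := by
  have h₁ : 0 < 1 - θ := by linarith
  set H := ∫⁻ a, F a ∂μ
  set U := ∫⁻ a, K a ^ (1 - θ)⁻¹ ∂μ
  rcases eq_or_ne U 0 with hU₀ | hU₀
  · have hK₀ : K =ᵐ[μ] 0 := by
      filter_upwards [(lintegral_eq_zero_iff' (hK.pow_const _)).1 hU₀] with a ha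
      simpa [ENNReal.rpow_eq_zero_iff, h₁, hθ₁.not_gt] using ha
    refine le_of_eq_of_le ?_ zero_le
    rw [lintegral_congr_ae (g := fun _ ↦ 0) (hK₀.mono fun a (ha : K a = 0) ↦ by simp [ha]),
      lintegral_zero]
  rcases eq_or_ne H 0 with hH₀ | hH₀
  · -- let `t → ∞` in the Young bound, along `t = 2 ^ n`
    refine le_of_eq_of_le (ENNReal.eq_zero_of_le_mul_pow (r := 2 ^ (-(θ / (1 - θ))))
      (ε := (ENNReal.ofReal (1 - θ) * U).toNNReal) ?_ fun n ↦ ?_) zero_le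
    · exact ENNReal.rpow_lt_one_of_one_lt_of_neg one_lt_two (neg_neg_of_pos (by positivity))
    · have h := lintegral_rpow_mul_le_add (F := F) hK hθ₀ hθ₁ (t := 2 ^ n) (by simp) (by simp)
      rw [show ∫⁻ a, F a ∂μ = 0 from hH₀, mul_zero, mul_zero, zero_add, mul_left_comm] at h
      rwa [coe_toNNReal (mul_ne_top ofReal_ne_top hKq), ← ENNReal.rpow_natCast,
        ← ENNReal.rpow_mul, mul_comm (-(θ / (1 - θ))), ENNReal.rpow_mul, ENNReal.rpow_natCast,
        mul_comm]
  rcases eq_or_ne H ⊤ with hH | hH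
  · simp [hH, ENNReal.top_rpow_of_pos hθ₀, ENNReal.rpow_eq_zero_iff, hU₀, hKq]
  · have ht₀ : (U / H) ^ (1 - θ) ≠ 0 :=
      (ENNReal.rpow_pos (ENNReal.div_pos hU₀ hH) (div_ne_top hKq hH₀)).ne'
    have ht : (U / H) ^ (1 - θ) ≠ ⊤ := ENNReal.rpow_ne_top_of_nonneg h₁.le (div_ne_top hKq hH₀)
    have e₁ : (U / H) ^ (1 - θ) * H = H ^ θ * U ^ (1 - θ) := by
      calc (U / H) ^ (1 - θ) * H = U ^ (1 - θ) * (H ^ (-(1 - θ)) * H ^ (1 : ℝ)) := by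
            rw [ENNReal.div_rpow_of_nonneg _ _ h₁.le, div_eq_mul_inv, ENNReal.rpow_neg,
              ENNReal.rpow_one, mul_assoc]
        _ = H ^ θ * U ^ (1 - θ) := by
            rw [← ENNReal.rpow_add _ _ hH₀ hH, neg_sub, sub_add_cancel, mul_comm]
    have e₂ : ((U / H) ^ (1 - θ)) ^ (-(θ / (1 - θ))) * U = H ^ θ * U ^ (1 - θ) := by
      calc ((U / H) ^ (1 - θ)) ^ (-(θ / (1 - θ))) * U
          = H ^ θ * (U ^ (-θ) * U ^ (1 : ℝ)) := by
            rw [← ENNReal.rpow_mul, show (1 - θ) * -(θ / (1 - θ)) = -θ by field_simp,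
              ENNReal.rpow_neg, ← ENNReal.inv_rpow, ENNReal.inv_div (.inl hH) (.inl hH₀),
              ENNReal.div_rpow_of_nonneg _ _ hθ₀.le, div_eq_mul_inv, ENNReal.rpow_neg,
              ENNReal.rpow_one, mul_assoc]
        _ = H ^ θ * U ^ (1 - θ) := by
            rw [← ENNReal.rpow_add _ _ hU₀ hKq, neg_add_eq_sub]
    calc ∫⁻ a, F a ^ θ * K a ∂μ
        ≤ ENNReal.ofReal θ * ((U / H) ^ (1 - θ) * H) +
            ENNReal.ofReal (1 - θ) * (((U / H) ^ (1 - θ)) ^ (-(θ / (1 - θ))) * U) :=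
          lintegral_rpow_mul_le_add hK hθ₀ hθ₁ ht₀ ht
      _ = H ^ θ * U ^ (1 - θ) := by
        rw [e₁, e₂, ← add_mul, ← ENNReal.ofReal_add hθ₀.le h₁.le, add_sub_cancel,
          ENNReal.ofReal_one, one_mul]

end Holder

section Kernel

variable {E : Type*} [NormedAddCommGroup E] [NormedSpace ℝ E] [FiniteDimensional ℝ E]
  [MeasurableSpace E] [BorelSpace E] (μ : Measure E) [μ.IsAddHaarMeasure] {β : ℝ}

lemma setLIntegral_ball_enorm_rpow_lt_top (hβ : -(Module.finrank ℝ E : ℝ) < β) (ρ : ℝ) :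
    ∫⁻ z in Metric.ball 0 ρ, ‖z‖ₑ ^ β ∂μ < ⊤ := by
  rcases le_or_gt 0 β with hβ₀ | hβ₀
  · calc ∫⁻ z in Metric.ball 0 ρ, ‖z‖ₑ ^ β ∂μ
        ≤ ∫⁻ _ in Metric.ball 0 ρ, ENNReal.ofReal ρ ^ β ∂μ := by
          refine setLIntegral_mono measurable_const fun z hz ↦ ?_
          rw [← ofReal_norm]
          exact ENNReal.rpow_le_rpow (ENNReal.ofReal_le_ofReal (mem_ball_zero_iff.1 hz).le) hβ₀
      _ < ⊤ := by
          rw [setLIntegral_const]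
          exact mul_lt_top (rpow_lt_top_of_nonneg hβ₀ ofReal_ne_top) measure_ball_lt_top
  · have hd : 1 ≤ Module.finrank ℝ E := by
      by_contra! h
      simp only [Nat.lt_one_iff.1 h, CharP.cast_eq_zero, neg_zero] at hβ
      linarith
    have : Nontrivial E := Module.nontrivial_of_finrank_pos (R := ℝ) hd
    have hint : IntegrableOn (fun z : E ↦ ‖z‖ ^ β) (Metric.ball 0 ρ) μ :=
      integrableOn_ball_of_norm_le_rpow (C := 1) (α := -β) hd (by linarith)
        (.of_forall fun z ↦ by simp [abs_of_nonneg (Real.rpow_nonneg (norm_nonneg z) β)])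
        (continuous_norm.measurable.pow_const β).aestronglyMeasurable
    refine lt_of_eq_of_lt (lintegral_congr_ae ?_) hint.hasFiniteIntegral
    filter_upwards [ae_restrict_of_ae (compl_mem_ae_iff.2 (measure_singleton (μ := μ) 0))]
      with z (hz : z ≠ 0)
    rw [Real.enorm_of_nonneg (by positivity), ← ENNReal.ofReal_rpow_of_pos (norm_pos_iff.2 hz),
      ofReal_norm]

lemma setLIntegral_prod_enorm_sub_rpow_lt_top {Ω : Set E} (hΩ : Bornology.IsBounded Ω)
    (hβ : -(Module.finrank ℝ E : ℝ) < β) :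
    ∫⁻ z in Ω ×ˢ Ω, ‖z.1 - z.2‖ₑ ^ β ∂(μ.prod μ) < ⊤ := by
  set ρ := Metric.diam Ω + 1
  set I := ∫⁻ z in Metric.ball 0 ρ, ‖z‖ₑ ^ β ∂μ
  have hsection : ∀ x ∈ Ω, ∫⁻ y in Ω, ‖x - y‖ₑ ^ β ∂μ ≤ I := fun x hx ↦ by
    calc ∫⁻ y in Ω, ‖x - y‖ₑ ^ β ∂μ
        ≤ ∫⁻ y in Ω, (Metric.ball 0 ρ).indicator (‖·‖ₑ ^ β) (y - x) ∂μ := by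
          refine setLIntegral_mono (((measurable_enorm.pow_const β).indicator
            measurableSet_ball).comp (measurable_sub_const x)) fun y hy ↦ ?_
          have hyx : y - x ∈ Metric.ball 0 ρ := by
            rw [mem_ball_zero_iff, ← dist_eq_norm]
            exact (Metric.dist_le_diam_of_mem hΩ hy hx).trans_lt (lt_add_one _)
          simp [indicator_of_mem hyx, enorm_sub_rev]
      _ ≤ ∫⁻ y, (Metric.ball 0 ρ).indicator (‖·‖ₑ ^ β) (y - x) ∂μ := setLIntegral_le_lintegral _ _
      _ = I := by
          rw [lintegral_sub_right_eq_self (fun z ↦ (Metric.ball 0 ρ).indicator (‖·‖ₑ ^ β) z),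
            lintegral_indicator measurableSet_ball]
  calc ∫⁻ z in Ω ×ˢ Ω, ‖z.1 - z.2‖ₑ ^ β ∂(μ.prod μ)
      = ∫⁻ z, ‖z.1 - z.2‖ₑ ^ β ∂(μ.restrict Ω).prod (μ.restrict Ω) := by
        rw [Measure.prod_restrict]
    _ ≤ ∫⁻ x in Ω, ∫⁻ y in Ω, ‖x - y‖ₑ ^ β ∂μ ∂μ := lintegral_prod_le _
    _ ≤ ∫⁻ _ in Ω, I ∂μ := setLIntegral_mono measurable_const hsection
    _ < ⊤ := by
        rw [setLIntegral_const]
        exact mul_lt_top (setLIntegral_ball_enorm_rpow_lt_top μ hβ ρ) hΩ.measure_lt_top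

end Kernel

lemma ENNReal.rpow_div_rpow_eq_rpow_mul {a c : ℝ≥0∞} (hc : c ≠ ⊤) (hac : c = 0 → a = 0)
    {n s₁ s₂ r p : ℝ} (hr : 0 < r) (hp : 0 < p) :
    a ^ r / c ^ (n + s₁ * r) =
      (a ^ p / c ^ (n + s₂ * p)) ^ (r / p) * c ^ ((s₂ - s₁) * r - n * (1 - r / p)) := by
  rcases eq_or_ne c 0 with rfl | hc₀
  · simp [hac rfl, ENNReal.zero_rpow_of_pos hr, ENNReal.zero_rpow_of_pos hp,
      ENNReal.zero_rpow_of_pos (div_pos hr hp)]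
  · rw [ENNReal.div_rpow_of_nonneg _ _ (div_pos hr hp).le, ← ENNReal.rpow_mul, ← ENNReal.rpow_mul,
      mul_div_cancel₀ _ hp.ne', div_eq_mul_inv, div_eq_mul_inv, mul_assoc, ← ENNReal.rpow_neg,
      ← ENNReal.rpow_neg, ← ENNReal.rpow_add _ _ hc₀ hc]
    congr 2
    field_simp
    ring

section Magnetic

variable {N : ℕ}

def magDensity (A : Euc N → Euc N) (f : Euc N → ℂ) (s p : ℝ) (z : Euc N × Euc N) : ℝ≥0∞ :=
  (‖mdiff A f z.1 z.2‖₊ : ℝ≥0∞) ^ p / (‖z.1 - z.2‖₊ : ℝ≥0∞) ^ ((N : ℝ) + s * p)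

lemma magJ_eq_setLIntegral_magDensity (A : Euc N → Euc N) (f : Euc N → ℂ)
    (H : Set (Euc N × Euc N)) (s p : ℝ) : magJ A f H s p = ∫⁻ z in H, magDensity A f s p z := rfl

lemma mdiff_self (A : Euc N → Euc N) (f : Euc N → ℂ) (x : Euc N) : mdiff A f x x = 0 := by
  simp [mdiff, phase]

lemma magDensity_eq_rpow_mul (A : Euc N → Euc N) (f : Euc N → ℂ) (z : Euc N × Euc N)
    {s₁ s₂ r p : ℝ} (hr : 0 < r) (hp : 0 < p) :
    magDensity A f s₁ r z =
      magDensity A f s₂ p z ^ (r / p) * ‖z.1 - z.2‖ₑ ^ ((s₂ - s₁) * r - N * (1 - r / p)) :=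
  ENNReal.rpow_div_rpow_eq_rpow_mul coe_ne_top
    (fun h ↦ by simp [sub_eq_zero.1 (nnnorm_eq_zero.1 (ENNReal.coe_eq_zero.1 h)), mdiff_self]) hr hp

lemma magSemi_rpow (A : Euc N → Euc N) (f : Euc N → ℂ) (Ω : Set (Euc N)) (s p t : ℝ) :
    magSemi A f Ω s p ^ t = magJ A f (Ω ×ˢ Ω) s p ^ (t / p) := by
  rw [magSemi, ← ENNReal.rpow_mul, one_div_mul_eq_div]

variable {Ω : Set (Euc N)} {s₁ s₂ r p : ℝ}

lemma magJ_prod_le_of_lt (hΩ : Bornology.IsBounded Ω) (hs : s₁ < s₂) (hr : 0 < r)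
    (hrp : r < p) :
    ∃ C : ℝ≥0∞, C ≠ ⊤ ∧ ∀ (A : Euc N → Euc N) (f : Euc N → ℂ),
      magJ A f (Ω ×ˢ Ω) s₁ r ≤ C * magJ A f (Ω ×ˢ Ω) s₂ p ^ (r / p) := by
  have hp : 0 < p := hr.trans hrp
  set θ := r / p
  have hθ₀ : 0 < θ := div_pos hr hp
  have hθ₁ : θ < 1 := (div_lt_one hp).2 hrp
  set γ := (s₂ - s₁) * r - N * (1 - θ)
  have hβ : -(Module.finrank ℝ (Euc N) : ℝ) < γ * (1 - θ)⁻¹ := by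
    rw [finrank_euclideanSpace_fin, ← div_eq_mul_inv, lt_div_iff₀ (by linarith)]
    nlinarith [mul_pos (sub_pos.2 hs) hr]
  set U := ∫⁻ z in Ω ×ˢ Ω, (‖z.1 - z.2‖ₑ ^ γ) ^ (1 - θ)⁻¹
  have hU : U < ⊤ := by
    simp_rw [U, ← ENNReal.rpow_mul]
    exact setLIntegral_prod_enorm_sub_rpow_lt_top volume hΩ hβ
  refine ⟨U ^ (1 - θ), rpow_ne_top_of_nonneg (by linarith) hU.ne, fun A f ↦ ?_⟩
  rw [magJ_eq_setLIntegral_magDensity, mul_comm]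
  simp_rw [magDensity_eq_rpow_mul A f _ hr hp (s₂ := s₂)]
  exact lintegral_rpow_mul_le ((measurable_fst.sub measurable_snd).enorm.pow_const γ).aemeasurable
    hθ₀ hθ₁ hU.ne

lemma magJ_prod_le_of_eq (hΩ : Bornology.IsBounded Ω) (hs : s₁ ≤ s₂) (hp : 0 < p)
    (A : Euc N → Euc N) (f : Euc N → ℂ) :
    magJ A f (Ω ×ˢ Ω) s₁ p ≤
      ENNReal.ofReal (Metric.diam Ω) ^ ((s₂ - s₁) * p) * magJ A f (Ω ×ˢ Ω) s₂ p := by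
  have hdiam : ∀ᵐ z ∂volume.restrict (Ω ×ˢ Ω), ‖z.1 - z.2‖ ≤ Metric.diam Ω :=
    ae_restrict_of_ae_restrict_of_subset
      (t := {z : Euc N × Euc N | ‖z.1 - z.2‖ ≤ Metric.diam Ω})
      (fun z hz ↦ (dist_eq_norm z.1 z.2).symm.trans_le (Metric.dist_le_diam_of_mem hΩ hz.1 hz.2))
      (ae_restrict_mem
        (measurableSet_le (measurable_fst.sub measurable_snd).norm measurable_const))
  calc magJ A f (Ω ×ˢ Ω) s₁ p
      ≤ ∫⁻ z in Ω ×ˢ Ω,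
          ENNReal.ofReal (Metric.diam Ω) ^ ((s₂ - s₁) * p) * magDensity A f s₂ p z := by
        refine lintegral_mono_ae (hdiam.mono fun z hz ↦ ?_)
        rw [← magDensity, magDensity_eq_rpow_mul A f z hp hp (s₁ := s₁) (s₂ := s₂),
          div_self hp.ne', ENNReal.rpow_one, sub_self, mul_zero, sub_zero, mul_comm,
          ← ofReal_norm]
        gcongr
    _ = _ := lintegral_const_mul' _ _ (rpow_ne_top_of_nonneg (by nlinarith) ofReal_ne_top)

lemma exists_magJ_prod_le (hΩ : Bornology.IsBounded Ω) (hs : s₁ < s₂) (hr : 0 < r)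
    (hrp : r ≤ p) :
    ∃ C : ℝ≥0∞, C ≠ ⊤ ∧ ∀ (A : Euc N → Euc N) (f : Euc N → ℂ),
      magJ A f (Ω ×ˢ Ω) s₁ r ≤ C * magJ A f (Ω ×ˢ Ω) s₂ p ^ (r / p) := by
  rcases hrp.eq_or_lt with rfl | hrp
  · refine ⟨ENNReal.ofReal (Metric.diam Ω) ^ ((s₂ - s₁) * r),
      rpow_ne_top_of_nonneg (by nlinarith) ofReal_ne_top, fun A f ↦ ?_⟩
    rw [div_self hr.ne', ENNReal.rpow_one]
    exact magJ_prod_le_of_eq hΩ hs.le hr A f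
  · exact magJ_prod_le_of_lt hΩ hs hr hrp

end Magnetic

theorem stmt_1_general {N : ℕ} (Ω : Set (Euc N)) (hΩb : Bornology.IsBounded Ω) (A : Euc N → Euc N)
    (s₁ s₂ r p : ℝ) (hs₁₂ : s₁ < s₂) (hr : 1 ≤ r) (hrp : r ≤ p) :
    ∃ C : ℝ, 0 < C ∧
      (∀ f : Euc N → ℂ, MemLp f (ENNReal.ofReal p) (volume.restrict Ω) →
        magSemi A f Ω s₁ r ^ r ≤
          ENNReal.ofReal (C / (s₂ - s₁) ^ ((p - r) / p)) * magSemi A f Ω s₂ p ^ r) ∧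
      (∀ f : Euc N → ℂ, MemLp f (ENNReal.ofReal p) (volume.restrict Ω) →
        magSemi A f Ω s₂ p < ∞ → magSemi A f Ω s₁ r < ∞) := by
  have hr₀ : 0 < r := one_pos.trans_le hr
  obtain ⟨C, hC, hJ⟩ := exists_magJ_prod_le hΩb hs₁₂ hr₀ hrp
  have key : ∀ f, magSemi A f Ω s₁ r ^ r ≤ C * magSemi A f Ω s₂ p ^ r := fun f ↦ by
    rw [magSemi_rpow, magSemi_rpow, div_self hr₀.ne', ENNReal.rpow_one]
    exact hJ A f
  have hs : 0 < (s₂ - s₁) ^ ((p - r) / p) := Real.rpow_pos_of_pos (sub_pos.2 hs₁₂) _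
  refine ⟨(C.toReal + 1) * (s₂ - s₁) ^ ((p - r) / p), by positivity, fun f _ ↦ ?_,
    fun f _ hf ↦ ?_⟩
  · rw [mul_div_cancel_right₀ _ hs.ne']
    refine (key f).trans (mul_le_mul_left ?_ _)
    exact (ENNReal.le_ofReal_iff_toReal_le hC (by positivity)).2 (lt_add_one _).le
  · rw [← ENNReal.rpow_lt_top_iff_of_pos hr₀]
    exact (key f).trans_lt (mul_lt_top hC.lt_top ((ENNReal.rpow_lt_top_iff_of_pos hr₀).2 hf))

/-- continuous embedding `W^{s₂,p}_A(Ω) ↪ W^{s₁,r}_A(Ω)` on a bounded set. -/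
theorem stmt_1 {N : ℕ} (Ω : Set (Euc N)) (hΩo : IsOpen Ω)
    (hΩb : Bornology.IsBounded Ω) (R : ℝ) (hR : Metric.diam Ω < R)
    (A : Euc N → Euc N) (MA : ℝ) (hA : ∀ x ∈ convexHull ℝ Ω, ‖A x‖ ≤ MA)
    (s₁ s₂ r p : ℝ) (hs₁ : 0 < s₁) (hs₁₂ : s₁ < s₂) (hs₂ : s₂ < 1)
    (hr : 1 ≤ r) (hrp : r ≤ p) :
    ∃ C : ℝ, 0 < C ∧
      (∀ f : Euc N → ℂ, MemLp f (ENNReal.ofReal p) (volume.restrict Ω) →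
        magSemi A f Ω s₁ r ^ r ≤
          ENNReal.ofReal (C / (s₂ - s₁) ^ ((p - r) / p)) * magSemi A f Ω s₂ p ^ r) ∧
      (∀ f : Euc N → ℂ, MemLp f (ENNReal.ofReal p) (volume.restrict Ω) →
        magSemi A f Ω s₂ p < ∞ → magSemi A f Ω s₁ r < ∞) :=
  stmt_1_general Ω hΩb A s₁ s₂ r p hs₁₂ hr hrp

end
end

section
/- Let N ≥ 1, p, q ≥ 1, s ∈ (0, 1/p). Let Ω = B(0,1) ⊆ ℝ^N, Λ = B(0,1/2), Γ = B(0,1) \ B(0,1/2), and f = χ_Λ the characteristic function of Λ. Then f ∈ W^{s,p}(Ω, ℂ), [f]_{W^{s,p}(Λ)} = 0, [f]_{W^{s,p}(Γ)} = 0, and ‖f‖_{L^q(Ω)} > 0. Consequently, no constant C makes the inequality [f]_{W^{s,p}(Λ)} + C [f]_{W^{s,r}(Γ)} ≥ c ‖f‖_{L^q(Ω)} hold for any c > 0. -/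
open MeasureTheory ENNReal NNReal Set
noncomputable section

/-!
The function `f = χ_Λ` is constant on `Λ` and on `Γ`, so both seminorms vanish, while
`‖f‖_{L^q(Ω)} > 0`. The substance is `f ∈ W^{s,p}(Ω)`: substituting `y = x - u`, the Gagliardo
energy is at most `2 ∫ |u|^{-N-sp} |{x ∈ Λ : x - u ∈ Ω \ Λ}| du`. Such `x` lie in a shell of width
`|u|` inside `Λ`, of volume `O(|u|)`, and `|u| < 3/2`, so the integrand is `O(|u|^{1-N-sp})` on a
bounded set, which is integrable because `sp < 1`.
-/

open Metric Module

theorem pow_sub_sub_pow_le {R d : ℝ} (n : ℕ) (hR : 0 < R) (hdR : d ≤ R) :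
    R ^ n - (R - d) ^ n ≤ n * d / R * R ^ n := by
  have hbern := one_add_mul_le_pow (by linarith [div_le_one_of_le₀ hdR hR.le] : -2 ≤ -(d / R)) n
  have hscale : (R - d) ^ n = R ^ n * (1 + -(d / R)) ^ n := by
    rw [← mul_pow]; congr 1; field_simp; ring
  calc R ^ n - (R - d) ^ n = R ^ n * (1 - (1 + -(d / R)) ^ n) := by rw [hscale]; ring
    _ ≤ R ^ n * (n * (d / R)) := by gcongr; linarith
    _ = n * d / R * R ^ n := by ring

theorem mul_rpow_le_rpow_add_one {x : ℝ} (hx : 0 ≤ x) (y : ℝ) : x * x ^ y ≤ x ^ (y + 1) := by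
  rcases hx.eq_or_lt with rfl | hx
  · rw [zero_mul]
    positivity
  · rw [Real.rpow_add_one hx.ne']
    exact (mul_comm _ _).le

theorem ball_inter_preimage_sub_ball_eq_empty {E : Type*} [SeminormedAddCommGroup E] (c : E)
    {u : E} {R ρ : ℝ} (hu : R + ρ ≤ ‖u‖) : ball c R ∩ (· - u) ⁻¹' ball c ρ = ∅ := by
  refine eq_empty_of_forall_notMem fun x ⟨hx, hxu⟩ => hu.not_gt ?_
  rw [mem_ball, dist_eq_norm] at hx
  rw [mem_preimage, mem_ball, dist_eq_norm] at hxu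
  calc ‖u‖ = ‖(x - c) - (x - u - c)‖ := by congr 1; abel
    _ ≤ ‖x - c‖ + ‖x - u - c‖ := norm_sub_le _ _
    _ < R + ρ := by linarith

theorem setLIntegral_prod_comp_sub {G : Type*} [AddCommGroup G] [MeasurableSpace G]
    [MeasurableAdd₂ G] [MeasurableNeg G] (μ : Measure G) [SFinite μ] [μ.IsAddLeftInvariant]
    [μ.IsNegInvariant] {A B : Set G} (hA : MeasurableSet A) (hB : MeasurableSet B)
    {w : G → ℝ≥0∞} (hw : Measurable w) :
    ∫⁻ z in A ×ˢ B, w (z.1 - z.2) ∂μ.prod μ = ∫⁻ u, μ (A ∩ (· - u) ⁻¹' B) * w u ∂μ := by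
  have hslice (x : G) : ∫⁻ y in B, w (x - y) ∂μ = ∫⁻ u, B.indicator 1 (x - u) * w u ∂μ := by
    rw [← lintegral_indicator hB, ← lintegral_sub_left_eq_self _ x]
    congr with u
    by_cases hu : x - u ∈ B <;> simp [hu]
  have hB' (u : G) : MeasurableSet ((· - u) ⁻¹' B) := measurable_sub_const u hB
  rw [setLIntegral_prod _ (by fun_prop), setLIntegral_congr_fun hA (fun x _ => hslice x),
    lintegral_lintegral_swap (by fun_prop)]
  congr with u
  rw [lintegral_mul_const _ (by fun_prop), inter_comm, ← Measure.restrict_apply (hB' u),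
    ← lintegral_indicator_one (hB' u)]
  rfl

section AddHaar

variable {E : Type*} [NormedAddCommGroup E] [NormedSpace ℝ E] [FiniteDimensional ℝ E]
  [MeasurableSpace E] [BorelSpace E] [Nontrivial E] (μ : Measure E) [μ.IsAddHaarMeasure]

theorem addHaar_ball_diff_ball_le (x : E) {R d : ℝ} (hR : 0 < R) (hd : 0 ≤ d) :
    μ (ball x R \ ball x (R - d)) ≤ ENNReal.ofReal (finrank ℝ E * d / R) * μ (ball x R) := by
  rcases le_or_gt d R with hdR | hRd
  · rw [measure_sdiff (ball_subset_ball (by linarith)) measurableSet_ball.nullMeasurableSet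
      measure_ball_lt_top.ne, μ.addHaar_ball x hR.le, μ.addHaar_ball x (by linarith : 0 ≤ R - d),
      ← ENNReal.sub_mul fun _ _ => measure_ball_lt_top.ne,
      ← ENNReal.ofReal_sub _ (by positivity), ← mul_assoc, ← ENNReal.ofReal_mul (by positivity)]
    gcongr
    exact pow_sub_sub_pow_le _ hR hdR
  · have hn : (1 : ℝ) ≤ finrank ℝ E := by exact_mod_cast finrank_pos
    calc μ (ball x R \ ball x (R - d)) ≤ 1 * μ (ball x R) := by
          rw [one_mul]; exact measure_mono sdiff_subset
      _ ≤ _ := by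
          gcongr
          rw [ENNReal.one_le_ofReal, le_div_iff₀ hR]
          nlinarith

theorem addHaar_ball_inter_preimage_sub_diff_ball_le (c u : E) (t : Set E) {R : ℝ} (hR : 0 < R) :
    μ (ball c R ∩ (· - u) ⁻¹' (t \ ball c R)) ≤
      ENNReal.ofReal (finrank ℝ E * ‖u‖ / R) * μ (ball c R) := by
  refine (measure_mono ?_).trans (addHaar_ball_diff_ball_le μ c hR (norm_nonneg u))
  rintro x ⟨hx, -, hxu⟩
  refine ⟨hx, fun hx' => hxu ?_⟩
  rw [mem_ball, dist_eq_norm] at hx hx' ⊢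
  calc ‖x - u - c‖ = ‖(x - c) - u‖ := by rw [sub_right_comm]
    _ ≤ ‖x - c‖ + ‖u‖ := norm_sub_le _ _
    _ < R := by linarith

theorem setLIntegral_ball_prod_diff_ball_lt_top (c : E) {R ρ a : ℝ} (hR : 0 < R)
    (ha : a < 1) :
    ∫⁻ z in ball c R ×ˢ (ball c ρ \ ball c R),
      ENNReal.ofReal (‖z.1 - z.2‖ ^ (-(finrank ℝ E + a))) ∂μ.prod μ < ∞ := by
  set n : ℝ := (finrank ℝ E : ℝ)
  set C := ENNReal.ofReal (n / R) * μ (ball c R)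
  have hbound (u : E) :
      μ (ball c R ∩ (· - u) ⁻¹' (ball c ρ \ ball c R)) * ENNReal.ofReal (‖u‖ ^ (-(n + a))) ≤
        (ball 0 (R + ρ)).indicator (fun u => C * ENNReal.ofReal (‖u‖ ^ (-(n + a) + 1))) u := by
    by_cases hu : u ∈ ball 0 (R + ρ)
    · rw [indicator_of_mem hu]
      calc μ (ball c R ∩ (· - u) ⁻¹' (ball c ρ \ ball c R)) * ENNReal.ofReal (‖u‖ ^ (-(n + a)))
          ≤ ENNReal.ofReal (n * ‖u‖ / R) * μ (ball c R) * ENNReal.ofReal (‖u‖ ^ (-(n + a))) := by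
            gcongr
            exact addHaar_ball_inter_preimage_sub_diff_ball_le μ c u _ hR
        _ = C * ENNReal.ofReal (‖u‖ * ‖u‖ ^ (-(n + a))) := by
            rw [mul_div_right_comm, ENNReal.ofReal_mul (by positivity),
              ENNReal.ofReal_mul (by positivity)]
            ring
        _ ≤ C * ENNReal.ofReal (‖u‖ ^ (-(n + a) + 1)) := by
            gcongr
            exact mul_rpow_le_rpow_add_one (norm_nonneg u) _
    · rw [mem_ball_zero_iff, not_lt] at hu
      have hnull : μ (ball c R ∩ (· - u) ⁻¹' (ball c ρ \ ball c R)) = 0 :=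
        measure_mono_null (inter_subset_inter_right _ (preimage_mono sdiff_subset))
          (by rw [ball_inter_preimage_sub_ball_eq_empty c hu, measure_empty])
      rw [hnull, zero_mul]
      exact zero_le
  have hint : IntegrableOn (fun u : E => ‖u‖ ^ (-(n + a) + 1)) (ball 0 (R + ρ)) μ :=
    integrableOn_ball_of_norm_le_rpow (C := 1) (α := n + a - 1) finrank_pos (by linarith)
      (ae_of_all _ fun u => by
        rw [Real.norm_of_nonneg (by positivity), one_mul, neg_sub, neg_add_eq_sub])
      (measurable_norm.pow_const _).aestronglyMeasurable
  calc _ = ∫⁻ u, μ (ball c R ∩ (· - u) ⁻¹' (ball c ρ \ ball c R)) *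
        ENNReal.ofReal (‖u‖ ^ (-(n + a))) ∂μ :=
        setLIntegral_prod_comp_sub μ measurableSet_ball
          (measurableSet_ball.diff measurableSet_ball) (by fun_prop)
    _ ≤ ∫⁻ u in ball 0 (R + ρ), C * ENNReal.ofReal (‖u‖ ^ (-(n + a) + 1)) ∂μ := by
        rw [← lintegral_indicator measurableSet_ball]
        exact lintegral_mono hbound
    _ < ∞ := by
        rw [lintegral_const_mul _ (by fun_prop)]
        exact mul_lt_top (mul_lt_top ofReal_lt_top measure_ball_lt_top) hint.setLIntegral_lt_top

end AddHaar

theorem phase_zero {N : ℕ} (x y : Euc N) : phase (fun _ => 0) x y = 1 := by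
  simp [phase]

theorem gagSemi_eq_zero_of_eqOn_const {N : ℕ} {f : Euc N → ℂ} {S : Set (Euc N)}
    (hS : MeasurableSet S) {c : ℂ} (hf : EqOn f (fun _ => c) S) (s : ℝ) {p : ℝ} (hp : 0 < p) :
    gagSemi f S s p = 0 := by
  have hJ : magJ (fun _ => 0) f (S ×ˢ S) s p = 0 := by
    rw [magJ, ← lintegral_zero (μ := volume.restrict (S ×ˢ S))]
    refine setLIntegral_congr_fun (hS.prod hS) fun z hz => ?_
    simp [mdiff, phase_zero, hf hz.1, hf hz.2, ENNReal.zero_rpow_of_pos hp]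
  rw [gagSemi, magSemi, hJ, ENNReal.zero_rpow_of_pos (by positivity)]

theorem inv_nnnorm_rpow_eq_ofReal {E : Type*} [NormedAddCommGroup E] {u : E} (hu : u ≠ 0)
    (b : ℝ) :
    ((‖u‖₊ : ℝ≥0∞) ^ b)⁻¹ = ENNReal.ofReal (‖u‖ ^ (-b)) := by
  rw [← ENNReal.rpow_neg, ← enorm_eq_nnnorm, ← ofReal_norm,
    ENNReal.ofReal_rpow_of_pos (norm_pos_iff.2 hu)]

theorem magJ_indicator_le {N : ℕ} {Λ Ω : Set (Euc N)} (hΛ : MeasurableSet Λ)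
    (hΩ : MeasurableSet Ω) (s : ℝ) {p : ℝ} (hp : 0 < p) :
    magJ (fun _ => 0) (Λ.indicator fun _ => (1 : ℂ)) (Ω ×ˢ Ω) s p ≤
      2 * ∫⁻ z in Λ ×ˢ (Ω \ Λ), ENNReal.ofReal (‖z.1 - z.2‖ ^ (-(N + s * p))) := by
  set P := Λ ×ˢ (Ω \ Λ)
  set K : Euc N × Euc N → ℝ≥0∞ := fun z => ENNReal.ofReal (‖z.1 - z.2‖ ^ (-(N + s * p)))
  have hK : Measurable K := by fun_prop
  have hP : MeasurableSet P := hΛ.prod (hΩ.diff hΛ)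
  have hbound : ∀ z ∈ Ω ×ˢ Ω,
      (‖mdiff (fun _ => 0) (Λ.indicator fun _ => (1 : ℂ)) z.1 z.2‖₊ : ℝ≥0∞) ^ p /
        (‖z.1 - z.2‖₊ : ℝ≥0∞) ^ ((N : ℝ) + s * p) ≤ P.indicator K z + P.indicator K z.swap := by
    rintro ⟨x, y⟩ ⟨hx, hy⟩
    simp only [mdiff, phase_zero, one_mul]
    by_cases hxΛ : x ∈ Λ <;> by_cases hyΛ : y ∈ Λ
    · simp [hxΛ, hyΛ, ENNReal.zero_rpow_of_pos hp]
    · have hxy : x - y ≠ 0 := sub_ne_zero.2 fun h => hyΛ (h ▸ hxΛ)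
      have hz : (x, y) ∈ P := ⟨hxΛ, hy, hyΛ⟩
      simp only [indicator_of_mem hxΛ, indicator_of_notMem hyΛ, indicator_of_mem hz, sub_zero,
        nnnorm_one, ENNReal.coe_one, ENNReal.one_rpow, one_div, inv_nnnorm_rpow_eq_ofReal hxy]
      exact le_self_add
    · have hxy : y - x ≠ 0 := sub_ne_zero.2 fun h => hxΛ (h ▸ hyΛ)
      have hz : (y, x) ∈ P := ⟨hyΛ, hx, hxΛ⟩
      simp only [indicator_of_mem hyΛ, indicator_of_notMem hxΛ, Prod.swap_prod_mk,
        indicator_of_mem hz, zero_sub, nnnorm_neg, nnnorm_one, ENNReal.coe_one, ENNReal.one_rpow,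
        one_div, ← nnnorm_neg (x - y), neg_sub, inv_nnnorm_rpow_eq_ofReal hxy]
      exact le_add_self
    · simp [hxΛ, hyΛ, ENNReal.zero_rpow_of_pos hp]
  calc magJ (fun _ => 0) (Λ.indicator fun _ => (1 : ℂ)) (Ω ×ˢ Ω) s p
      ≤ ∫⁻ z in Ω ×ˢ Ω, P.indicator K z + P.indicator K z.swap :=
        setLIntegral_mono' (hΩ.prod hΩ) hbound
    _ ≤ ∫⁻ z, P.indicator K z + P.indicator K z.swap := setLIntegral_le_lintegral _ _
    _ = 2 * ∫⁻ z in P, K z := by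
        rw [lintegral_add_left (hK.indicator hP), Measure.volume_eq_prod,
          lintegral_prod_swap (P.indicator K), lintegral_indicator hP, two_mul]

theorem memW_indicator_ball {N : ℕ} (hN : 0 < N) {s p : ℝ} (hp : 0 < p) (hsp : s * p < 1)
    {R : ℝ} (hR : 0 < R) (ρ : ℝ) :
    memW ((ball (0 : Euc N) R).indicator fun _ => (1 : ℂ)) (ball 0 ρ) s p := by
  have : Nonempty (Fin N) := ⟨⟨0, hN⟩⟩
  refine ⟨memLp_indicator_const _ measurableSet_ball 1 (Or.inr ?_), ?_⟩
  · rw [Measure.restrict_apply measurableSet_ball]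
    exact ((measure_mono inter_subset_left).trans_lt measure_ball_lt_top).ne
  · have hfin := setLIntegral_ball_prod_diff_ball_lt_top volume (0 : Euc N) (ρ := ρ) hR hsp
    rw [finrank_euclideanSpace_fin, ← Measure.volume_eq_prod] at hfin
    rw [gagSemi, magSemi]
    refine ENNReal.rpow_lt_top_of_nonneg (by positivity) (ne_of_lt ?_)
    exact (magJ_indicator_le measurableSet_ball measurableSet_ball s hp).trans_lt
      (mul_lt_top ofNat_lt_top hfin)

theorem eLpNorm_restrict_indicator_const_ne_zero {α F : Type*} [MeasurableSpace α]
    [NormedAddCommGroup F] {μ : Measure α} {Λ Ω : Set α} (hΛ : MeasurableSet Λ)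
    (hΛΩ : μ (Λ ∩ Ω) ≠ 0) {c : F} (hc : c ≠ 0)
    {q : ℝ≥0∞} (hq : q ≠ 0) (hq_top : q ≠ ∞) :
    eLpNorm (Λ.indicator fun _ => c) q (μ.restrict Ω) ≠ 0 := by
  rw [eLpNorm_indicator_const hΛ hq hq_top, Measure.restrict_apply hΛ]
  refine mul_ne_zero (enorm_ne_zero.2 hc) ?_
  simp [ENNReal.rpow_eq_zero_iff, hΛΩ, ENNReal.toReal_pos hq hq_top]

theorem stmt_12_general {N : ℕ} (hN : 0 < N) (p q s : ℝ) (hp : 1 ≤ p) (hq : 1 ≤ q)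
    (hs : s < 1 / p) :
    let Ω : Set (Euc N) := Metric.ball 0 1
    let Λ : Set (Euc N) := Metric.ball 0 (1/2)
    let Γ : Set (Euc N) := Metric.ball 0 1 \ Metric.ball 0 (1/2)
    let f : Euc N → ℂ := Λ.indicator fun _ => (1 : ℂ)
    memW f Ω s p ∧ gagSemi f Λ s p = 0 ∧ gagSemi f Γ s p = 0 ∧
      eLpNorm f (ENNReal.ofReal q) (volume.restrict Ω) ≠ 0 ∧
      ∀ C c r : ℝ, 1 ≤ r → 0 < c →
        ¬ (ENNReal.ofReal c * eLpNorm f (ENNReal.ofReal q) (volume.restrict Ω) ≤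
            gagSemi f Λ s p + ENNReal.ofReal C * gagSemi f Γ s r) := by
  intro Ω Λ Γ f
  have hp0 : 0 < p := by linarith
  have hΛ (r : ℝ) (hr : 0 < r) : gagSemi f Λ s r = 0 :=
    gagSemi_eq_zero_of_eqOn_const measurableSet_ball (fun x hx => indicator_of_mem hx _) s hr
  have hΓ (r : ℝ) (hr : 0 < r) : gagSemi f Γ s r = 0 :=
    gagSemi_eq_zero_of_eqOn_const (measurableSet_ball.diff measurableSet_ball)
      (fun x hx => indicator_of_notMem hx.2 _) s hr
  have hLq : eLpNorm f (ENNReal.ofReal q) (volume.restrict Ω) ≠ 0 := by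
    refine eLpNorm_restrict_indicator_const_ne_zero measurableSet_ball ?_ one_ne_zero
      (ENNReal.ofReal_pos.2 (by linarith)).ne' ofReal_ne_top
    rw [inter_eq_left.2 (ball_subset_ball (by norm_num))]
    exact (measure_ball_pos volume 0 (by norm_num)).ne'
  refine ⟨memW_indicator_ball hN hp0 ((lt_div_iff₀ hp0).1 hs) (by norm_num) 1, hΛ p hp0,
    hΓ p hp0, hLq, fun C c r hr hc hle => ?_⟩
  rw [hΛ p hp0, hΓ r (by linarith), mul_zero, add_zero, nonpos_iff_eq_zero, mul_eq_zero,
    ENNReal.ofReal_eq_zero] at hle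
  exact hle.elim (fun h => h.not_gt hc) hLq

/-- the characteristic function of the half ball as a counterexample to the
naive nonlocal punctured-domain Poincaré inequality. -/
theorem stmt_12 {N : ℕ} (hN : 0 < N) (p q s : ℝ) (hp : 1 ≤ p) (hq : 1 ≤ q)
    (hs0 : 0 < s) (hs : s < 1 / p) :
    let Ω : Set (Euc N) := Metric.ball 0 1
    let Λ : Set (Euc N) := Metric.ball 0 (1/2)
    let Γ : Set (Euc N) := Metric.ball 0 1 \ Metric.ball 0 (1/2)
    let f : Euc N → ℂ := Λ.indicator fun _ => (1 : ℂ)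
    memW f Ω s p ∧ gagSemi f Λ s p = 0 ∧ gagSemi f Γ s p = 0 ∧
      eLpNorm f (ENNReal.ofReal q) (volume.restrict Ω) ≠ 0 ∧
      ∀ C c r : ℝ, 1 ≤ r → 0 < c →
        ¬ (ENNReal.ofReal c * eLpNorm f (ENNReal.ofReal q) (volume.restrict Ω) ≤
            gagSemi f Λ s p + ENNReal.ofReal C * gagSemi f Γ s r) :=
  stmt_12_general hN p q s hp hq hs
end
end
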